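/- Let V be a finite-dimensional real vector space and 𝕋V = V × V* its generalized tangent space with the pairing ⟨(u,ξ),(v,η)⟩ = ξ(v) + η(u). If L and R are Lagrangian subspaces of 𝕋V, then their tangent product L ⋆ R := {(u, ξ+η) : (u,ξ) ∈ L, (u,η) ∈ R} is a Lagrangian subspace of 𝕋V. -/

import Mathlib

open Module

variable {V W : Type*} [AddCommGroup V] [Module ℝ V] [AddCommGroup W] [Module ℝ W]

/-- The canonical symmetric pairing on the generalized tangent space `𝕋V = V × V*`:
`⟨(u,ξ),(v,η)⟩ = ξ(v) + η(u)`. -/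
noncomputable def gpair : (V × Module.Dual ℝ V) →ₗ[ℝ] (V × Module.Dual ℝ V) →ₗ[ℝ] ℝ :=
  LinearMap.mk₂ ℝ (fun a b => a.2 b.1 + b.2 a.1)
    (fun a a' b => by
      simp only [Prod.fst_add, Prod.snd_add, LinearMap.add_apply, map_add]; ring)
    (fun r a b => by
      simp only [Prod.smul_fst, Prod.smul_snd, LinearMap.smul_apply, map_smul,
        smul_eq_mul]; ring)
    (fun a b b' => by
      simp only [Prod.fst_add, Prod.snd_add, LinearMap.add_apply, map_add]; ring)
    (fun r a b => by
      simp only [Prod.smul_fst, Prod.smul_snd, LinearMap.smul_apply, map_smul,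
        smul_eq_mul]; ring)

/-- Orthogonal complement with respect to the canonical pairing on `𝕋V`. -/
noncomputable def gperp (S : Submodule ℝ (V × Module.Dual ℝ V)) :
    Submodule ℝ (V × Module.Dual ℝ V) where
  carrier := {a | ∀ b ∈ S, gpair a b = 0}
  add_mem' := by
    intro a b ha hb c hc
    rw [map_add, LinearMap.add_apply, ha c hc, hb c hc, add_zero]
  zero_mem' := by
    intro c hc
    rw [map_zero, LinearMap.zero_apply]
  smul_mem' := by
    intro r a ha c hc
    rw [map_smul, LinearMap.smul_apply, ha c hc, smul_zero]

/-- A subspace of `𝕋V` is Lagrangian if it equals its own orthogonal complement. -/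
def IsLagrangian (L : Submodule ℝ (V × Module.Dual ℝ V)) : Prop :=
  gperp L = L

/-- A linear map `π : V* → V` is skew-symmetric. -/
def IsSkew (π : Module.Dual ℝ V →ₗ[ℝ] V) : Prop :=
  ∀ ξ η : Module.Dual ℝ V, η (π ξ) = -(ξ (π η))

/-- The tangent product `L ⋆ R = {(u, ξ+η) : (u,ξ) ∈ L, (u,η) ∈ R}`. -/
def tanProd (L R : Submodule ℝ (V × Module.Dual ℝ V)) :
    Submodule ℝ (V × Module.Dual ℝ V) where
  carrier := {a | ∃ ξ η : Module.Dual ℝ V, (a.1, ξ) ∈ L ∧ (a.1, η) ∈ R ∧ a.2 = ξ + η}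
  add_mem' := by
    rintro a b ⟨ξ, η, h1, h2, h3⟩ ⟨ξ', η', h1', h2', h3'⟩
    refine ⟨ξ + ξ', η + η', ?_, ?_, ?_⟩
    · simpa [Prod.fst_add] using L.add_mem h1 h1'
    · simpa [Prod.fst_add] using R.add_mem h2 h2'
    · simp only [Prod.snd_add, h3, h3']; abel
  zero_mem' := ⟨0, 0, by convert L.zero_mem using 1 <;> simp, by convert R.zero_mem using 1 <;> simp, by simp⟩
  smul_mem' := by
    rintro r a ⟨ξ, η, h1, h2, h3⟩
    refine ⟨r • ξ, r • η, ?_, ?_, ?_⟩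
    · simpa [Prod.smul_fst] using L.smul_mem r h1
    · simpa [Prod.smul_fst] using R.smul_mem r h2
    · simp only [Prod.smul_snd, h3, smul_add]

/-- The cotangent product `L ⊛ R = {(u+v, ξ) : (u,ξ) ∈ L, (v,ξ) ∈ R}`. -/
def cotProd (L R : Submodule ℝ (V × Module.Dual ℝ V)) :
    Submodule ℝ (V × Module.Dual ℝ V) where
  carrier := {a | ∃ u v : V, (u, a.2) ∈ L ∧ (v, a.2) ∈ R ∧ a.1 = u + v}
  add_mem' := by
    rintro a b ⟨u, v, h1, h2, h3⟩ ⟨u', v', h1', h2', h3'⟩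
    refine ⟨u + u', v + v', ?_, ?_, ?_⟩
    · simpa [Prod.snd_add] using L.add_mem h1 h1'
    · simpa [Prod.snd_add] using R.add_mem h2 h2'
    · simp only [Prod.fst_add, h3, h3']; abel
  zero_mem' := ⟨0, 0, by convert L.zero_mem using 1 <;> simp, by convert R.zero_mem using 1 <;> simp, by simp⟩
  smul_mem' := by
    rintro r a ⟨u, v, h1, h2, h3⟩
    refine ⟨r • u, r • v, ?_, ?_, ?_⟩
    · simpa [Prod.smul_snd] using L.smul_mem r h1
    · simpa [Prod.smul_snd] using R.smul_mem r h2
    · simp only [Prod.smul_fst, h3, smul_add]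

/-- The backward image `φ^!(L) = {(u, η ∘ φ) : (φ(u), η) ∈ L}`. -/
def back (φ : V →ₗ[ℝ] W) (L : Submodule ℝ (W × Module.Dual ℝ W)) :
    Submodule ℝ (V × Module.Dual ℝ V) where
  carrier := {a | ∃ η : Module.Dual ℝ W, (φ a.1, η) ∈ L ∧ a.2 = η.comp φ}
  add_mem' := by
    rintro a b ⟨η, h1, h2⟩ ⟨η', h1', h2'⟩
    refine ⟨η + η', ?_, ?_⟩
    · simpa [Prod.fst_add, map_add] using L.add_mem h1 h1'
    · simp only [Prod.snd_add, h2, h2', LinearMap.add_comp]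
  zero_mem' := ⟨0, by convert L.zero_mem using 1 <;> simp, by simp⟩
  smul_mem' := by
    rintro r a ⟨η, h1, h2⟩
    refine ⟨r • η, ?_, ?_⟩
    · simpa [Prod.smul_fst, map_smul] using L.smul_mem r h1
    · simp only [Prod.smul_snd, h2, LinearMap.smul_comp]

/-- The forward image `φ_!(L) = {(φ(u), η) : (u, η ∘ φ) ∈ L}`. -/
def fwd (φ : V →ₗ[ℝ] W) (L : Submodule ℝ (V × Module.Dual ℝ V)) :
    Submodule ℝ (W × Module.Dual ℝ W) where
  carrier := {b | ∃ u : V, φ u = b.1 ∧ (u, b.2.comp φ) ∈ L}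
  add_mem' := by
    rintro a b ⟨u, h1, h2⟩ ⟨u', h1', h2'⟩
    refine ⟨u + u', ?_, ?_⟩
    · simp only [map_add, h1, h1', Prod.fst_add]
    · have := L.add_mem h2 h2'
      simpa [Prod.snd_add, LinearMap.add_comp] using this
  zero_mem' := ⟨0, by simp, by convert L.zero_mem using 1 <;> simp⟩
  smul_mem' := by
    rintro r a ⟨u, h1, h2⟩
    refine ⟨r • u, ?_, ?_⟩
    · simp only [map_smul, h1, Prod.smul_fst]
    · have := L.smul_mem r h2
      simpa [Prod.smul_snd, LinearMap.smul_comp] using this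

/-- The graph `Gr(π) = {(π(ξ), ξ) : ξ ∈ V*}` of a map `π : V* → V`. -/
def gr (π : Module.Dual ℝ V →ₗ[ℝ] V) : Submodule ℝ (V × Module.Dual ℝ V) where
  carrier := {a | π a.2 = a.1}
  add_mem' := by
    intro a b ha hb
    simp only [Set.mem_setOf_eq, Prod.fst_add, Prod.snd_add, map_add] at *
    rw [ha, hb]
  zero_mem' := by simp
  smul_mem' := by
    intro r a ha
    simp only [Set.mem_setOf_eq, Prod.smul_fst, Prod.smul_snd, map_smul] at *
    rw [ha]

/-! Isotropy of `L ⋆ R` is immediate from that of `L` and `R`. For the converse, let `(v, ζ)` be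
orthogonal to `L ⋆ R`. For a Lagrangian `L` the vertical part `L ∩ V*` is the annihilator of the
projection `pr L ⊆ V`; since `L ∩ V*` and `R ∩ V*` lie in `L ⋆ R`, this gives `v ∈ pr L ∩ pr R`.
Lifting `v` to `(v, ξ₀) ∈ L` and `(v, η₀) ∈ R`, the defect `ζ - ξ₀ - η₀` annihilates
`pr L ∩ pr R`, so it lies in `ann (pr L) + ann (pr R) = (L ∩ V*) + (R ∩ V*)`; correcting the two
lifts by its summands exhibits `(v, ζ)` as an element of `L ⋆ R`. -/

lemma gpair_apply (a b : V × Module.Dual ℝ V) : gpair a b = a.2 b.1 + b.2 a.1 := rfl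

namespace IsLagrangian

variable {L : Submodule ℝ (V × Module.Dual ℝ V)}

lemma mem_iff (hL : IsLagrangian L) {a : V × Module.Dual ℝ V} :
    a ∈ L ↔ ∀ b ∈ L, gpair a b = 0 := by
  nth_rw 1 [← hL]
  rfl

lemma gpair_eq_zero (hL : IsLagrangian L) {a b : V × Module.Dual ℝ V} (ha : a ∈ L)
    (hb : b ∈ L) : gpair a b = 0 :=
  hL.mem_iff.1 ha b hb

lemma zero_prod_mem_iff (hL : IsLagrangian L) (ξ : Module.Dual ℝ V) :
    ((0 : V), ξ) ∈ L ↔ ξ ∈ (L.map (LinearMap.fst ℝ V (Module.Dual ℝ V))).dualAnnihilator := by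
  rw [hL.mem_iff]
  simp [gpair_apply]

lemma mem_map_fst_of_forall {v : V} (hL : IsLagrangian L)
    (hv : ∀ ξ : Module.Dual ℝ V, ((0 : V), ξ) ∈ L → ξ v = 0) :
    v ∈ L.map (LinearMap.fst ℝ V (Module.Dual ℝ V)) := by
  rw [← Subspace.forall_mem_dualAnnihilator_apply_eq_zero_iff]
  exact fun ξ hξ ↦ hv ξ ((hL.zero_prod_mem_iff ξ).2 hξ)

end IsLagrangian

lemma tanProd_le_gperp {L R : Submodule ℝ (V × Module.Dual ℝ V)} (hL : L ≤ gperp L)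
    (hR : R ≤ gperp R) : tanProd L R ≤ gperp (tanProd L R) := by
  rintro ⟨u, _⟩ ⟨ξ, η, hξ, hη, rfl⟩ ⟨u', _⟩ ⟨ξ', η', hξ', hη', rfl⟩
  have hLξ : gpair (u, ξ) (u', ξ') = 0 := hL hξ _ hξ'
  have hRη : gpair (u, η) (u', η') = 0 := hR hη _ hη'
  simp only [gpair_apply, LinearMap.add_apply] at hLξ hRη ⊢
  linarith

section Coisotropic

variable {L R : Submodule ℝ (V × Module.Dual ℝ V)} {v : V} {ζ : Module.Dual ℝ V}

lemma sub_sub_mem_dualAnnihilator_inf (hL : IsLagrangian L) (hR : IsLagrangian R)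
    (hv : (v, ζ) ∈ gperp (tanProd L R)) {ξ₀ η₀ : Module.Dual ℝ V} (hξ₀ : (v, ξ₀) ∈ L)
    (hη₀ : (v, η₀) ∈ R) :
    ζ - ξ₀ - η₀ ∈ (L.map (LinearMap.fst ℝ V (Module.Dual ℝ V)) ⊓
      R.map (LinearMap.fst ℝ V (Module.Dual ℝ V))).dualAnnihilator := by
  rw [Submodule.mem_dualAnnihilator]
  rintro u ⟨⟨⟨u₁, ξ⟩, hξ, hu₁ : u₁ = u⟩, ⟨⟨u₂, η⟩, hη, hu₂ : u₂ = u⟩⟩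
  subst u₁ u₂
  have hperp : gpair (v, ζ) (u, ξ + η) = 0 := hv _ ⟨ξ, η, hξ, hη, rfl⟩
  have hLξ := hL.gpair_eq_zero hξ hξ₀
  have hRη := hR.gpair_eq_zero hη hη₀
  simp only [gpair_apply, LinearMap.add_apply] at hperp hLξ hRη
  simp only [LinearMap.sub_apply]
  linarith

lemma gperp_tanProd_le (hL : IsLagrangian L) (hR : IsLagrangian R) :
    gperp (tanProd L R) ≤ tanProd L R := by
  rintro ⟨v, ζ⟩ hv
  have hvL : v ∈ L.map (LinearMap.fst ℝ V (Module.Dual ℝ V)) := hL.mem_map_fst_of_forall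
    fun ξ hξ ↦ by simpa [gpair_apply] using hv (0, ξ) ⟨ξ, 0, hξ, R.zero_mem, by simp⟩
  have hvR : v ∈ R.map (LinearMap.fst ℝ V (Module.Dual ℝ V)) := hR.mem_map_fst_of_forall
    fun η hη ↦ by simpa [gpair_apply] using hv (0, η) ⟨0, η, L.zero_mem, hη, by simp⟩
  obtain ⟨⟨v', ξ₀⟩, hξ₀, hv' : v' = v⟩ := hvL
  subst v'
  obtain ⟨⟨v', η₀⟩, hη₀, hv' : v' = v⟩ := hvR
  subst v'
  have hδ := sub_sub_mem_dualAnnihilator_inf hL hR hv hξ₀ hη₀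
  rw [Subspace.dualAnnihilator_inf_eq, Submodule.mem_sup] at hδ
  obtain ⟨ξ₁, hξ₁, η₁, hη₁, hsum⟩ := hδ
  refine ⟨ξ₀ + ξ₁, η₀ + η₁, ?_, ?_, ?_⟩
  · simpa using L.add_mem hξ₀ ((hL.zero_prod_mem_iff ξ₁).2 hξ₁)
  · simpa using R.add_mem hη₀ ((hR.zero_prod_mem_iff η₁).2 hη₁)
  · rw [add_add_add_comm, hsum]
    abel

end Coisotropic

theorem stmt1_general
    (L R : Submodule ℝ (V × Module.Dual ℝ V))
    (hL : IsLagrangian L) (hR : IsLagrangian R) :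
    IsLagrangian (tanProd L R) :=
  le_antisymm (gperp_tanProd_le hL hR) (tanProd_le_gperp hL.ge hR.ge)

theorem stmt1 [FiniteDimensional ℝ V]
    (L R : Submodule ℝ (V × Module.Dual ℝ V))
    (hL : IsLagrangian L) (hR : IsLagrangian R) :
    IsLagrangian (tanProd L R) :=
  stmt1_general L R hL hR
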